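/- arXiv:1907.01087 — 2 statements merged into one kernel-verified Lean document; each statement's English description precedes it below -/
import Mathlib

section
/- Let w = (h₅∘h₄∘h₁)(e₂+e₃) − (e₂+e₃). Then w is a nonzero vector lying in the radical of B (B(w,x) = 0 for all x ∈ ℚ⁵), and w is fixed by every reflection: hᵢ(w) = w for i = 1,…,5. -/
open Matrix

/-- The Gram matrix of the intersection form on the subspace of `ℤ₂`-invariant cycles
in the Milnor fibre of `x₁⁴ + x₂⁴ + y₁²` (the singularity `M₅`), in the basis
`δ₁ = Δ₁, δ₂ = Δ₂+Δ₄, δ₃ = Δ₃+Δ₅, δ₄ = Δ₆+Δ₈, δ₅ = Δ₇+Δ₉`. -/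
def G : Matrix (Fin 5) (Fin 5) ℚ :=
  !![-2,  2,  2, -2, -2;
      2, -4,  0,  2,  2;
      2,  0, -4,  2,  2;
     -2,  2,  2, -4,  0;
     -2,  2,  2,  0, -4]

/-- The associated symmetric bilinear form `B(u,v) = uᵀGv` on `ℚ⁵`. -/
def B (u v : Fin 5 → ℚ) : ℚ := u ⬝ᵥ G.mulVec v

/-- The standard basis `e₁, …, e₅` of `ℚ⁵` (0-indexed). -/
def e : Fin 5 → (Fin 5 → ℚ) := fun i => Pi.single i 1

/-- The reflection `hᵢ(a) = a − (2B(a,eᵢ)/B(eᵢ,eᵢ))·eᵢ` in the basis vector `eᵢ`. -/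
def h (i : Fin 5) (a : Fin 5 → ℚ) : Fin 5 → ℚ :=
  a - (2 * B a (e i) / B (e i) (e i)) • e i

/-- The vector `w = (h₅∘h₄∘h₁)(e₂+e₃) − (e₂+e₃)` (written 0-indexed). -/
def w : Fin 5 → ℚ := h 4 (h 3 (h 0 (e 1 + e 2))) - (e 1 + e 2)

lemma w_eq : w = ![4, 0, 0, -2, -2] := by
  funext j
  fin_cases j <;>
    simp [w, h, B, e, G, Matrix.mulVec, dotProduct, Fin.sum_univ_five,
      Pi.single_apply] <;> norm_num

lemma B_w (x : Fin 5 → ℚ) : B w x = 0 := by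
  simp [w_eq, B, Matrix.mulVec, dotProduct, Fin.sum_univ_five, G, Matrix.vecHead, Matrix.vecTail]
  ring

/-- `w = (h₅∘h₄∘h₁)(e₂+e₃) − (e₂+e₃)` is a nonzero vector lying in the radical of `B`,
and it is fixed by every reflection `hᵢ`. -/
theorem w_nonzero_in_radical_and_fixed :
    w ≠ 0 ∧ (∀ x : Fin 5 → ℚ, B w x = 0) ∧ ∀ i : Fin 5, h i w = w := by
  refine ⟨?_, B_w, fun i => ?_⟩
  · intro hw
    have : w 0 = 0 := by rw [hw]; rfl
    rw [w_eq] at this; norm_num at this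
  · simp [h, B_w]
end

section
/- The subgroup of GL(ℚ⁵) generated by the five reflections h₁, h₂, h₃, h₄, h₅ is infinite (this is the equivariant monodromy group of the germ x₁⁴+x₂⁴+y₁² acting on the subspace of ℤ₂-invariant cycles). -/
open Matrix

/-- The unipotent element `h₀ ∘ h₁ ∘ h₀ ∘ h₂` of the monodromy group. -/
def F : Function.End (Fin 5 → ℚ) := h 0 ∘ h 1 ∘ h 0 ∘ h 2

lemma key (c : ℚ) : h 0 (h 1 (h 0 (h 2 (![2*c, c, c, 1, 0])))) = ![2*c+2, c+1, c+1, 1, 0] := by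
  funext j
  fin_cases j <;>
    simp [h, B, e, G, Matrix.mulVec, dotProduct, Fin.sum_univ_five,
      Pi.single_apply, Matrix.vecHead, Matrix.vecTail, Pi.smul_apply, Pi.sub_apply,
      Function.comp, smul_eq_mul] <;> norm_num [Fin.ext_iff, Fin.succ] <;> ring

lemma F_pow (n : ℕ) :
    (F ^ n) (![0, 0, 0, 1, 0]) = ![2 * (n : ℚ), (n : ℚ), (n : ℚ), 1, 0] := by
  induction n with
  | zero =>
    show (![0, 0, 0, 1, 0] : Fin 5 → ℚ) = _
    norm_num
  | succ n ih =>
    have h1 : F ^ (n + 1) = F * F ^ n := by rw [pow_succ']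
    have h2 : (F * F ^ n) (![0, 0, 0, 1, 0]) = F ((F ^ n) (![0, 0, 0, 1, 0])) := rfl
    rw [h1, h2, ih]
    show h 0 (h 1 (h 0 (h 2 _))) = _
    rw [key (n : ℚ)]
    push_cast
    ring_nf

/-- The subgroup generated by the five reflections `h₁, …, h₅` (equivalently, since each
`hᵢ` is an involution, the submonoid of `Function.End (Fin 5 → ℚ)` they generate) is
infinite: this is the equivariant monodromy group of the germ `x₁⁴+x₂⁴+y₁²` acting on
the subspace of `ℤ₂`-invariant cycles. -/
theorem monodromy_group_infinite :
    Set.Infinite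
      ((Submonoid.closure {f : Function.End (Fin 5 → ℚ) | ∃ i : Fin 5, f = h i} :
        Submonoid (Function.End (Fin 5 → ℚ))) : Set (Function.End (Fin 5 → ℚ))) := by
  set S : Submonoid (Function.End (Fin 5 → ℚ)) :=
    Submonoid.closure {f : Function.End (Fin 5 → ℚ) | ∃ i : Fin 5, f = h i} with hS
  have hgen : ∀ i : Fin 5, (h i : Function.End (Fin 5 → ℚ)) ∈ S :=
    fun i => Submonoid.subset_closure ⟨i, rfl⟩
  have key2 : ∀ a b : Function.End (Fin 5 → ℚ), a ∈ S → b ∈ S →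
      ((a ∘ b : (Fin 5 → ℚ) → (Fin 5 → ℚ)) : Function.End (Fin 5 → ℚ)) ∈ S :=
    fun a b ha hb => mul_mem ha hb
  have hF : F ∈ S :=
    key2 _ _ (hgen 0) (key2 _ _ (hgen 1) (key2 _ _ (hgen 0) (hgen 2)))
  apply Set.infinite_of_injective_forall_mem (f := fun n : ℕ => F ^ n)
  · intro m n hmn
    have hmn' : F ^ m = F ^ n := hmn
    have h1 := F_pow m
    rw [hmn', F_pow n] at h1
    have h2 : (2 : ℚ) * n = 2 * m := by
      have := congrFun h1 0
      simpa using this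
    have : (m : ℚ) = n := by linarith
    exact_mod_cast this
  · intro n
    exact S.pow_mem hF n
end
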